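/- arXiv:0812.2870 — 2 statements merged into one kernel-verified Lean document; each statement's English description precedes it below -/
import Mathlib

section
/- If Alice plays a follow-Bob strategy on a pizza with an odd number of pieces (she picks an arbitrary first piece p and thereafter always picks the piece just revealed by Bob's previous move), then at the end of the game there is a cut C with p ∈ R(C) such that Alice has eaten exactly the pieces of R(C) and Bob exactly the pieces of G(C). -/
/-!
Pizza game model.  Pieces are indexed by `ZMod n`.  A play is determined by
Alice's starting piece `p` and a sequence of direction choices
`d : ℕ → Bool`: the choice `d t` determines the piece eaten at move `t+1`
(`true` = clockwise end of the eaten interval, `false` = counterclockwise).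
Moves are numbered `0, …, n-1`; Alice moves at even indices, Bob at odd ones,
so the choice `d t` is made by Bob when `t` is even and by Alice when `t` is odd.
A strategy is a function from the list of previous direction choices to a choice.
-/

/-- The history of direction choices after `t` choices, when Alice plays `σ`
and Bob plays `τ`. -/
def hist (σ τ : List Bool → Bool) : ℕ → List Bool
  | 0 => []
  | t + 1 => hist σ τ t ++ [if Even t then τ (hist σ τ t) else σ (hist σ τ t)]

/-- The direction chosen at step `t` (determining the piece eaten at move `t+1`,
which belongs to Alice iff `t` is odd): Bob chooses it if `t` is even,
Alice if `t` is odd. -/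
def choice (σ τ : List Bool → Bool) (t : ℕ) : Bool :=
  if Even t then τ (hist σ τ t) else σ (hist σ τ t)

/-- The piece eaten at move `t`, given starting piece `p` and direction
choices `d`. -/
def piece (n : ℕ) (p : ZMod n) (d : ℕ → Bool) : ℕ → ZMod n
  | 0 => p
  | t + 1 =>
      if d t then
        p + ((((Finset.range (t + 1)).filter fun i => d i = true).card : ℕ) : ZMod n)
      else
        p - ((((Finset.range (t + 1)).filter fun i => d i = false).card : ℕ) : ZMod n)

/-- Alice's outcome: total size of the pieces eaten at even-numbered moves. -/
noncomputable def aliceOutcome (n : ℕ) [NeZero n] (s : ZMod n → ℝ) (p : ZMod n)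
    (σ τ : List Bool → Bool) : ℝ :=
  ∑ t ∈ Finset.range n, if Even t then s (piece n p (choice σ τ) t) else 0

/-- Bob's outcome: total size of the pieces eaten at odd-numbered moves. -/
noncomputable def bobOutcome (n : ℕ) [NeZero n] (s : ZMod n → ℝ) (p : ZMod n)
    (σ τ : List Bool → Bool) : ℝ :=
  ∑ t ∈ Finset.range n, if Even t then 0 else s (piece n p (choice σ τ) t)

/-- The follow-Bob strategy: Alice always repeats Bob's previous direction
choice, i.e. she picks the piece just revealed by Bob. -/
def followBob : List Bool → Bool := fun L => L.getLastD true

/-!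
Under follow-Bob, Alice's direction at step `2k+1` repeats Bob's at step `2k`, so each end of
the eaten interval grows in pairs: after an even number of steps both ends have advanced an even
distance. Hence the piece eaten at move `t` lies at an integer offset from `p` of the same parity
as `t`. The `n` offsets are distinct and fill an interval `[-F, T]` with `T + F = n - 1` and `F`
even, so measuring from the cut `C = p - F` turns them into `0, …, n - 1`, each with the parity
of its move: Alice's moves give the even ones, Bob's the odd ones.
-/

namespace Pizza

open Finset Function

lemma exists_lt_eq_of_injOn_range {β : Type*} [Fintype β] {n : ℕ} (hn : Fintype.card β ≤ n)
    {f : ℕ → β} (hf : Set.InjOn f (range n)) (b : β) : ∃ t < n, f t = b := by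
  obtain ⟨t, ht, rfl⟩ := surjOn_of_injOn_of_card_le f (t := univ) (fun _ _ => mem_univ _) hf
    (by simpa using hn) (mem_univ b)
  exact ⟨t, mem_range.1 ht, rfl⟩

lemma mem_image_filter_iff {β : Type*} [DecidableEq β] {n : ℕ} {f : ℕ → β}
    {P : ℕ → Prop} [DecidablePred P] {Q : β → Prop} (hf : ∀ b, ∃ t < n, f t = b)
    (hPQ : ∀ t < n, (Q (f t) ↔ P t)) (b : β) :
    b ∈ ((range n).filter P).image f ↔ Q b := by
  constructor
  · intro hb
    obtain ⟨t, ht, rfl⟩ := mem_image.1 hb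
    rw [mem_filter, mem_range] at ht
    exact (hPQ t ht.1).2 ht.2
  · intro hb
    obtain ⟨t, ht, rfl⟩ := hf b
    exact mem_image_of_mem f (mem_filter.2 ⟨mem_range.2 ht, (hPQ t ht).1 hb⟩)

/-- The offset from `p` of the piece eaten at move `t`, as an integer: the eaten pieces always
form the interval from `p - #false` to `p + #true`, counting the directions chosen so far. -/
def displacement (d : ℕ → Bool) : ℕ → ℤ
  | 0 => 0
  | t + 1 => if d t then (Nat.count (d · = true) (t + 1) : ℤ)
      else -(Nat.count (d · = false) (t + 1) : ℤ)

section Displacement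

variable (d : ℕ → Bool)

lemma count_true_add_count_false (t : ℕ) :
    Nat.count (d · = true) t + Nat.count (d · = false) t = t := by
  induction t with
  | zero => simp
  | succ t ih => cases h : d t <;> simp [Nat.count_succ, h] <;> omega

lemma piece_eq_add_displacement (n : ℕ) (p : ZMod n) (t : ℕ) :
    piece n p d t = p + displacement d t := by
  cases t with
  | zero => simp [piece, displacement]
  | succ t =>
    cases h : d t <;> simp [piece, displacement, h, Nat.count_eq_card_filter_range, sub_eq_add_neg]

lemma displacement_le_count_true (t : ℕ) : displacement d t ≤ Nat.count (d · = true) t := by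
  cases t with
  | zero => simp [displacement]
  | succ t => cases h : d t <;> simp [displacement, h]

lemma neg_count_false_le_displacement (t : ℕ) :
    -(Nat.count (d · = false) t : ℤ) ≤ displacement d t := by
  cases t with
  | zero => simp [displacement]
  | succ t => cases h : d t <;> simp [displacement, h]

lemma displacement_succ_ne {t m : ℕ} (htm : t ≤ m) :
    displacement d (m + 1) ≠ displacement d t := by
  have hT := displacement_le_count_true d t
  have hF := neg_count_false_le_displacement d t
  have hTm := Nat.count_monotone (d · = true) htm
  have hFm := Nat.count_monotone (d · = false) htm
  rw [displacement]
  cases h : d m <;> simp [h, Nat.count_succ] <;> omega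

lemma displacement_injective : Injective (displacement d) :=
  Injective.of_lt_imp_ne fun t t' h => by
    obtain ⟨m, rfl⟩ := Nat.exists_eq_add_one_of_ne_zero (by omega : t' ≠ 0)
    exact (displacement_succ_ne d (by omega)).symm

end Displacement

section Paired

variable {d : ℕ → Bool} (hd : ∀ k, d (2 * k + 1) = d (2 * k))
include hd

lemma even_count_two_mul (b : Bool) (k : ℕ) : Even (Nat.count (d · = b) (2 * k)) := by
  induction k with
  | zero => simp
  | succ k ih =>
    rw [Nat.mul_succ, Nat.count_succ, Nat.count_succ, hd]
    split_ifs <;> simp [ih, parity_simps]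

lemma even_count_succ_iff {b : Bool} {m : ℕ} (h : d m = b) :
    Even (Nat.count (d · = b) (m + 1)) ↔ Even (m + 1) := by
  obtain ⟨k, rfl | rfl⟩ := Nat.even_or_odd' m
  · simp [Nat.count_succ, h, Nat.even_add_one, even_count_two_mul hd]
  · rw [show 2 * k + 1 + 1 = 2 * (k + 1) by ring]
    simp [even_count_two_mul hd]

lemma even_displacement_iff (t : ℕ) : Even (displacement d t) ↔ Even t := by
  cases t with
  | zero => simp [displacement]
  | succ m =>
    cases h : d m <;> simp [displacement, h, even_neg, Int.even_coe_nat, even_count_succ_iff hd h]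

end Paired

lemma choice_followBob_odd (τ : List Bool → Bool) (k : ℕ) :
    choice followBob τ (2 * k + 1) = choice followBob τ (2 * k) := by
  simp [choice, hist, followBob]

lemma val_piece_sub_cut (n : ℕ) [NeZero n] (p : ZMod n) (d : ℕ → Bool) {t : ℕ} (ht : t < n) :
    ((piece n p d t - (p - Nat.count (d · = false) (n - 1))).val : ℤ) =
      displacement d t + Nat.count (d · = false) (n - 1) := by
  have hT := (displacement_le_count_true d t).trans
    (Int.ofNat_le.2 (Nat.count_monotone (d · = true) (Nat.le_sub_one_of_lt ht)))
  have hF := (neg_le_neg (Int.ofNat_le.2 (Nat.count_monotone (d · = false)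
    (Nat.le_sub_one_of_lt ht)))).trans (neg_count_false_le_displacement d t)
  have hTF := count_true_add_count_false d (n - 1)
  have hcast : piece n p d t - (p - Nat.count (d · = false) (n - 1)) =
      ((displacement d t + Nat.count (d · = false) (n - 1) : ℤ) : ZMod n) := by
    rw [piece_eq_add_displacement]
    push_cast
    ring
  rw [hcast, ZMod.val_intCast, Int.emod_eq_of_lt] <;> omega

theorem exists_cut_of_paired {n : ℕ} [NeZero n] (hn : Odd n) (p : ZMod n) {d : ℕ → Bool}
    (hd : ∀ k, d (2 * k + 1) = d (2 * k)) :
    ∃ C : ZMod n, Even ((p - C).val) ∧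
      (∀ i : ZMod n,
        (i ∈ ((range n).filter fun t => Even t).image (piece n p d) ↔
          Even ((i - C).val))) ∧
      (∀ i : ZMod n,
        (i ∈ ((range n).filter fun t => ¬ Even t).image (piece n p d) ↔
          ¬ Even ((i - C).val))) := by
  set C := p - Nat.count (d · = false) (n - 1)
  have hval (t : ℕ) (ht : t < n) := val_piece_sub_cut n p d ht
  have hinj : Set.InjOn (piece n p d) (range n) := fun t ht t' ht' h => by
    have := hval t (mem_range.1 ht)
    rw [h, hval t' (mem_range.1 ht')] at this
    exact displacement_injective d (by omega)
  have hsurj := exists_lt_eq_of_injOn_range (ZMod.card n).le hinj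
  have hF : Even (Nat.count (d · = false) (n - 1)) := by
    obtain ⟨k, rfl⟩ := hn
    simpa using even_count_two_mul hd false k
  have hpar (t : ℕ) (ht : t < n) : Even (piece n p d t - C).val ↔ Even t := by
    rw [← Int.even_coe_nat, hval t ht, Int.even_add, Int.even_coe_nat,
      even_displacement_iff hd]
    simp [hF]
  exact ⟨C, (hpar 0 (NeZero.pos n)).2 .zero, mem_image_filter_iff hsurj hpar,
    mem_image_filter_iff hsurj fun t ht => (hpar t ht).not⟩

end Pizza

/-- If Alice plays follow-Bob on an odd pizza, starting at piece `p`, then at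
the end of the game there is a cut `C` with `p ∈ R(C)` such that Alice's eaten
pieces are exactly `R(C)` and Bob's are exactly `G(C)`, where `(R(C), G(C))` is
the almost alternating coloring induced by `C` (piece `i` is red iff
`(i - C).val` is even). -/
theorem stmt7 (n : ℕ) [NeZero n] (hn : Odd n) (p : ZMod n) (τ : List Bool → Bool) :
    ∃ C : ZMod n, Even ((p - C).val) ∧
      (∀ i : ZMod n,
        (i ∈ ((Finset.range n).filter fun t => Even t).image
            (piece n p (choice followBob τ)) ↔ Even ((i - C).val))) ∧
      (∀ i : ZMod n,
        (i ∈ ((Finset.range n).filter fun t => ¬ Even t).image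
            (piece n p (choice followBob τ)) ↔ ¬ Even ((i - C).val))) :=
  Pizza.exists_cut_of_paired hn p (Pizza.choice_followBob_odd τ)
end

section
/- If an odd pizza has two neighboring cuts C, C' (enclosing a single piece p between them) that are both best answers (each minimizes ‖R(·)‖ over cuts whose red class contains some fixed piece and is a best answer in the game-theoretic sense), then R(C) ∪ R(C') is the whole pizza, and hence max(‖R(C)‖, ‖R(C')‖) ≥ half the total size; consequently Alice has a follow-Bob strategy eating at least half of the pizza. -/
/-- Total size of the red pieces `R(C)` of the almost alternating coloring
induced by the cut `C`: piece `i` is red iff `(i - C).val` is even. -/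
noncomputable def redSize (n : ℕ) [NeZero n] (s : ZMod n → ℝ) (C : ZMod n) : ℝ :=
  ∑ i : ZMod n, if Even ((i - C).val) then s i else 0

/-!
Following Bob, Alice always eats the piece next to the one Bob has just eaten, on the same side.
Hence every round extends the eaten interval by two pieces on one side, and Alice's pieces are
every second piece of the final interval of `2M + 1` pieces, starting at one of its ends: they
form the red class `R(D)` of a cut `D` at even distance from her first piece. If she starts at
the piece that a best answer `C` responds to, she thus eats `‖R(D)‖ ≥ ‖R(C)‖`. Finally
`R(C) ∪ R(C + 1)` is the whole pizza (a piece at odd distance from `C` is at even distance from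
`C + 1`), so the better of the two neighbouring best answers is worth at least half the pizza.
-/

open Finset

lemma ZMod.sum_eq_sum_range {β : Type*} [AddCommMonoid β] {n : ℕ} [NeZero n] (g : ZMod n → β) :
    ∑ x, g x = ∑ i ∈ range n, g i :=
  sum_nbij' ZMod.val (fun i => (i : ZMod n)) (fun x _ => mem_range.2 x.val_lt)
    (fun _ _ => mem_univ _) (fun x _ => ZMod.natCast_zmod_val x)
    (fun _ hi => ZMod.val_cast_of_lt (mem_range.1 hi))
    (fun x _ => by rw [ZMod.natCast_zmod_val])

lemma sum_range_two_mul_add_one_ite_even {β : Type*} [AddCommMonoid β] (g : ℕ → β) (M : ℕ) :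
    ∑ t ∈ range (2 * M + 1), (if Even t then g t else 0) = ∑ k ∈ range (M + 1), g (2 * k) := by
  induction M with
  | zero => simp
  | succ M ih =>
    rw [show 2 * (M + 1) + 1 = 2 * M + 1 + 1 + 1 by ring, sum_range_succ, sum_range_succ, ih,
      sum_range_succ (n := M + 1), if_neg (Nat.not_even_two_mul_add_one M),
      if_pos ⟨M + 1, by ring⟩, add_zero]
    ring_nf

lemma even_val_sub_or_even_val_sub_add_one {n : ℕ} [NeZero n] (i C : ZMod n) :
    Even (i - C).val ∨ Even (i - (C + 1)).val := by
  rcases Nat.even_or_odd (i - C).val with h | h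
  · exact .inl h
  · right
    have hone : (1 : ZMod n).val = 1 := by
      rw [ZMod.val_one_eq_one_mod, Nat.mod_eq_of_lt]
      have := (i - C).val_lt
      obtain ⟨k, hk⟩ := h
      omega
    rw [show i - (C + 1) = i - C - 1 by ring, ZMod.val_sub (hone ▸ h.pos), hone]
    exact Nat.Odd.sub_odd h odd_one

lemma sum_le_redSize_add_redSize {n : ℕ} [NeZero n] {s : ZMod n → ℝ} (hs : ∀ i, 0 ≤ s i)
    {C C' : ZMod n} (hcover : ∀ i : ZMod n, Even (i - C).val ∨ Even (i - C').val) :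
    ∑ i, s i ≤ redSize n s C + redSize n s C' := by
  rw [redSize, redSize, ← sum_add_distrib]
  refine sum_le_sum fun i _ => ?_
  rcases hcover i with h | h <;> simp only [h, if_true] <;> split_ifs <;> linarith [hs i]

lemma redSize_odd_eq (M : ℕ) (s : ZMod (2 * M + 1) → ℝ) (D : ZMod (2 * M + 1)) :
    redSize (2 * M + 1) s D = ∑ k ∈ range (M + 1), s (D + (2 * k : ℕ)) := by
  rw [redSize, ← Equiv.sum_comp (Equiv.addLeft D), ZMod.sum_eq_sum_range,
    ← sum_range_two_mul_add_one_ite_even fun i => s (D + i)]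
  refine sum_congr rfl fun i hi => ?_
  simp only [Equiv.coe_addLeft, add_sub_cancel_left, ZMod.val_cast_of_lt (mem_range.1 hi)]

def dirCount (e : ℕ → Bool) (b : Bool) (k : ℕ) : ℕ :=
  ((range k).filter fun i => e i = b).card

lemma dirCount_succ (e : ℕ → Bool) (b : Bool) (k : ℕ) :
    dirCount e b (k + 1) = dirCount e b k + if e k = b then 1 else 0 := by
  simp only [dirCount, card_filter, sum_range_succ]

lemma dirCount_true_add_dirCount_false (e : ℕ → Bool) (k : ℕ) :
    dirCount e true k + dirCount e false k = k := by
  induction k with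
  | zero => rfl
  | succ k ih => cases h : e k <;> simp [dirCount_succ, h] <;> omega

lemma dirCount_le (e : ℕ → Bool) (b : Bool) (k : ℕ) : dirCount e b k ≤ k :=
  (card_filter_le _ _).trans_eq (card_range k)

lemma dirCount_two_mul {d : ℕ → Bool} (hd : ∀ k, d (2 * k + 1) = d (2 * k)) (b : Bool) (k : ℕ) :
    dirCount d b (2 * k) = 2 * dirCount (fun j => d (2 * j)) b k := by
  induction k with
  | zero => rfl
  | succ k ih =>
    rw [show 2 * (k + 1) = 2 * k + 1 + 1 by ring, dirCount_succ, dirCount_succ, hd, ih,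
      dirCount_succ]
    split_ifs <;> ring

/-- Position, relative to the starting piece, of the piece eaten at move `t + 1`. -/
def offset (e : ℕ → Bool) (t : ℕ) : ℤ :=
  if e t then dirCount e true (t + 1) else -(dirCount e false (t + 1) : ℤ)

lemma piece_succ (n : ℕ) (p : ZMod n) (d : ℕ → Bool) (t : ℕ) :
    piece n p d (t + 1) = p + (offset d t : ZMod n) := by
  simp only [piece, offset, dirCount]
  split_ifs <;> push_cast <;> ring

lemma offset_two_mul_add_one {d : ℕ → Bool} (hd : ∀ k, d (2 * k + 1) = d (2 * k)) (k : ℕ) :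
    offset d (2 * k + 1) = 2 * offset (fun j => d (2 * j)) k := by
  simp only [offset, hd, show 2 * k + 1 + 1 = 2 * (k + 1) by ring, dirCount_two_mul hd]
  split_ifs <;> push_cast <;> ring

/-- The eaten pieces always form an interval: after the starting piece and `K` further moves it
runs from `-dirCount e false K` to `dirCount e true K`. -/
lemma sum_offset {β : Type*} [AddCommMonoid β] (f : ℤ → β) (e : ℕ → Bool) (K : ℕ) :
    f 0 + ∑ k ∈ range K, f (offset e k) = ∑ i ∈ range (K + 1), f (i - dirCount e false K) := by
  induction K with
  | zero => simp [dirCount]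
  | succ K ih =>
    rw [sum_range_succ, ← add_assoc, ih]
    cases h : e K
    · rw [sum_range_succ' _ (K + 1)]
      simp [offset, h, dirCount_succ]
    · have hK := dirCount_true_add_dirCount_false e K
      rw [sum_range_succ _ (K + 1)]
      simp only [offset, h, ↓reduceIte, dirCount_succ, Nat.cast_add, Nat.cast_one,
        Bool.true_eq_false, add_zero]
      congr 2
      omega

lemma choice_followBob_two_mul_add_one (τ : List Bool → Bool) (k : ℕ) :
    choice followBob τ (2 * k + 1) = choice followBob τ (2 * k) := by
  simp [choice, hist, followBob]

lemma aliceOutcome_followBob_eq_redSize (M : ℕ) (s : ZMod (2 * M + 1) → ℝ)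
    (p : ZMod (2 * M + 1)) (τ : List Bool → Bool) :
    aliceOutcome (2 * M + 1) s p followBob τ = redSize (2 * M + 1) s
      (p - (2 * dirCount (fun j => choice followBob τ (2 * j)) false M : ℕ)) := by
  set d := choice followBob τ
  have hd : ∀ k, d (2 * k + 1) = d (2 * k) := choice_followBob_two_mul_add_one τ
  let f : ℤ → ℝ := fun j => s (p + 2 * (j : ZMod (2 * M + 1)))
  calc aliceOutcome (2 * M + 1) s p followBob τ
      = ∑ k ∈ range (M + 1), s (piece (2 * M + 1) p d (2 * k)) :=
        sum_range_two_mul_add_one_ite_even _ M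
    _ = f 0 + ∑ k ∈ range M, f (offset (fun j => d (2 * j)) k) := by
        rw [sum_range_succ', add_comm]
        congr 1
        · simp [f, piece]
        · refine sum_congr rfl fun k _ => ?_
          rw [show 2 * (k + 1) = 2 * k + 1 + 1 by ring, piece_succ, offset_two_mul_add_one hd]
          push_cast
          rfl
    _ = _ := by
        rw [sum_offset, redSize_odd_eq]
        refine sum_congr rfl fun i _ => ?_
        simp only [f]
        push_cast
        ring_nf

lemma redSize_le_aliceOutcome_followBob {n : ℕ} [NeZero n] (hn : Odd n) (s : ZMod n → ℝ)
    {C q : ZMod n} (hbest : ∀ D : ZMod n, Even (q - D).val → redSize n s C ≤ redSize n s D)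
    (τ : List Bool → Bool) : redSize n s C ≤ aliceOutcome n s q followBob τ := by
  obtain ⟨M, rfl⟩ := hn
  rw [aliceOutcome_followBob_eq_redSize]
  refine hbest _ ?_
  have hc := dirCount_le (fun j => choice followBob τ (2 * j)) false M
  rw [sub_sub_cancel, ZMod.val_cast_of_lt (by omega)]
  exact even_two_mul _

theorem stmt10_general (n : ℕ) [NeZero n] (hn : Odd n) (s : ZMod n → ℝ) (hs : ∀ i, 0 ≤ s i)
    (C q q' : ZMod n)
    (hbestC : ∀ D : ZMod n, Even ((q - D).val) → redSize n s C ≤ redSize n s D)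
    (hbestC' : ∀ D : ZMod n, Even ((q' - D).val) → redSize n s (C + 1) ≤ redSize n s D) :
    (∀ i : ZMod n, Even ((i - C).val) ∨ Even ((i - (C + 1)).val)) ∧
    (∑ i, s i) / 2 ≤ max (redSize n s C) (redSize n s (C + 1)) ∧
    ∃ p : ZMod n, ∀ τ : List Bool → Bool,
      (∑ i, s i) / 2 ≤ aliceOutcome n s p followBob τ := by
  have hcover := fun i => even_val_sub_or_even_val_sub_add_one i C
  have hhalf : (∑ i, s i) / 2 ≤ max (redSize n s C) (redSize n s (C + 1)) := by
    linarith [sum_le_redSize_add_redSize hs hcover,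
      le_max_left (redSize n s C) (redSize n s (C + 1)),
      le_max_right (redSize n s C) (redSize n s (C + 1))]
  refine ⟨hcover, hhalf, ?_⟩
  rcases max_choice (redSize n s C) (redSize n s (C + 1)) with h | h
  · exact ⟨q, fun τ => (h ▸ hhalf).trans (redSize_le_aliceOutcome_followBob hn s hbestC τ)⟩
  · exact ⟨q', fun τ => (h ▸ hhalf).trans (redSize_le_aliceOutcome_followBob hn s hbestC' τ)⟩

/-- If two neighboring cuts `C` and `C + 1` of an odd pizza (enclosing the
single piece between them) are both best answers (to pieces `q` resp. `q'`),
then `R(C) ∪ R(C+1)` is the whole pizza, hence the larger of `‖R(C)‖` and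
`‖R(C+1)‖` is at least half the total size; consequently Alice has a
follow-Bob strategy eating at least half of the pizza. -/
theorem stmt10 (n : ℕ) [NeZero n] (hn : Odd n) (s : ZMod n → ℝ) (hs : ∀ i, 0 ≤ s i)
    (C q q' : ZMod n)
    (hq : Even ((q - C).val))
    (hbestC : ∀ D : ZMod n, Even ((q - D).val) → redSize n s C ≤ redSize n s D)
    (hq' : Even ((q' - (C + 1)).val))
    (hbestC' : ∀ D : ZMod n, Even ((q' - D).val) → redSize n s (C + 1) ≤ redSize n s D) :
    (∀ i : ZMod n, Even ((i - C).val) ∨ Even ((i - (C + 1)).val)) ∧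
    (∑ i, s i) / 2 ≤ max (redSize n s C) (redSize n s (C + 1)) ∧
    ∃ p : ZMod n, ∀ τ : List Bool → Bool,
      (∑ i, s i) / 2 ≤ aliceOutcome n s p followBob τ :=
  stmt10_general n hn s hs C q q' hbestC hbestC'
end
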